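/- For every positive integer n, the integer {2}-domination number of the grid graph G_{2,n} = P_2 □ P_n equals n+1. -/
import Mathlib

open SimpleGraph Finset
open scoped Classical

/-- Sum of `f` over the closed neighborhood of `v`. -/
noncomputable def nbhdSum {V : Type*} [Fintype V] (G : SimpleGraph V) (f : V → ℕ) (v : V) : ℕ :=
  ∑ u ∈ Finset.univ.filter (fun u => G.Adj v u ∨ u = v), f u

/-- `f` is an integer `{2}`-dominating function of `G`. -/
def IsTwoDomFn {V : Type*} [Fintype V] (G : SimpleGraph V) (f : V → ℕ) : Prop :=
  ∀ v, 2 ≤ nbhdSum G f v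

/-- The integer `{2}`-domination number of `G`. -/
noncomputable def gamma2 {V : Type*} [Fintype V] (G : SimpleGraph V) : ℕ :=
  sInf {w | ∃ f, IsTwoDomFn G f ∧ w = ∑ v, f v}

lemma nbhdSum_eq (n : ℕ) (f : Fin 2 × Fin n → ℕ) (i : Fin 2) (j : Fin n) :
    nbhdSum (pathGraph 2 □ pathGraph n) f (i, j)
      = f (i, j) + f (Fin.rev i, j)
        + (if h : j.val + 1 < n then f (i, ⟨j.val + 1, h⟩) else 0)
        + (if h : 0 < j.val then f (i, ⟨j.val - 1, by omega⟩) else 0) := by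
  unfold nbhdSum
  rw [Finset.sum_filter, Fintype.sum_prod_type]
  have hi := i.isLt
  have hj := j.isLt
  have hrev : (Fin.rev i : ℕ) = 1 - (i : ℕ) := by
    rw [Fin.val_rev]; omega
  have hcond : ∀ (a : Fin 2) (b : Fin n),
      ((pathGraph 2 □ pathGraph n).Adj (i, j) (a, b) ∨ (a, b) = (i, j)) ↔
      (((a : ℕ) = (i : ℕ) ∧ (b : ℕ) = (j : ℕ)) ∨
       ((a : ℕ) = (Fin.rev i : ℕ) ∧ (b : ℕ) = (j : ℕ)) ∨
       ((a : ℕ) = (i : ℕ) ∧ (b : ℕ) = (j : ℕ) + 1) ∨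
       ((a : ℕ) = (i : ℕ) ∧ (b : ℕ) + 1 = (j : ℕ))) := by
    intro a b
    rw [boxProd_adj]
    simp only [pathGraph_adj, Prod.mk.injEq, Prod.ext_iff, Fin.ext_iff]
    have ha := a.isLt
    have hb := b.isLt
    omega
  simp only [hcond]
  have split : ∀ (a : Fin 2) (b : Fin n),
      (if (((a : ℕ) = (i : ℕ) ∧ (b : ℕ) = (j : ℕ)) ∨
       ((a : ℕ) = (Fin.rev i : ℕ) ∧ (b : ℕ) = (j : ℕ)) ∨
       ((a : ℕ) = (i : ℕ) ∧ (b : ℕ) = (j : ℕ) + 1) ∨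
       ((a : ℕ) = (i : ℕ) ∧ (b : ℕ) + 1 = (j : ℕ))) then f (a, b) else 0)
      = (if ((a : ℕ) = (i : ℕ) ∧ (b : ℕ) = (j : ℕ)) then f (a, b) else 0)
        + (if ((a : ℕ) = (Fin.rev i : ℕ) ∧ (b : ℕ) = (j : ℕ)) then f (a, b) else 0)
        + (if ((a : ℕ) = (i : ℕ) ∧ (b : ℕ) = (j : ℕ) + 1) then f (a, b) else 0)
        + (if ((a : ℕ) = (i : ℕ) ∧ (b : ℕ) + 1 = (j : ℕ)) then f (a, b) else 0) := by
    intro a b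
    have ha := a.isLt
    have hb := b.isLt
    split_ifs <;> first | (exfalso; omega) | simp
  simp only [split, Finset.sum_add_distrib]
  have innerB : ∀ (a : Fin 2) (P : Prop) [inst : Decidable P] (m : ℕ),
      (∑ b : Fin n, if P ∧ (b : ℕ) = m then f (a, b) else 0)
        = if h : m < n then (if P then f (a, ⟨m, h⟩) else 0) else 0 := by
    intro a P inst m
    by_cases hm : m < n
    · simp only [dif_pos hm]
      have hb : ∀ b : Fin n, ((b : ℕ) = m) ↔ b = ⟨m, hm⟩ := by
        intro b; simp [Fin.ext_iff]
      by_cases hP : P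
      · simp only [hP, true_and, hb]
        simp [Finset.sum_ite_eq']
      · simp [hP]
    · have hb : ∀ b : Fin n, ¬((b : ℕ) = m) := fun b h => by have := b.isLt; omega
      simp [hb, hm]
  have outerA : ∀ (z : Fin n) (w : Fin 2),
      (∑ a : Fin 2, if (a : ℕ) = (w : ℕ) then f (a, z) else 0) = f (w, z) := by
    intro z w
    have ha : ∀ a : Fin 2, ((a : ℕ) = (w : ℕ)) ↔ a = w := by
      intro a; simp [Fin.ext_iff]
    simp only [ha]
    simp [Finset.sum_ite_eq']
  have c4 : ∀ b : Fin n, ((b : ℕ) + 1 = (j : ℕ)) ↔ (0 < (j : ℕ) ∧ (b : ℕ) = (j : ℕ) - 1) := by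
    intro b; omega
  congr 1
  · congr 1
    · congr 1
      · -- t1
        simp only [innerB, dif_pos hj, Fin.eta, outerA]
      · -- t2
        simp only [innerB, dif_pos hj, Fin.eta, outerA]
    · -- t3 : m = j+1
      by_cases h : (j : ℕ) + 1 < n
      · simp only [innerB, dif_pos h, outerA, dif_pos h]
      · simp only [innerB, dif_neg h, dif_neg h, Finset.sum_const_zero]
  · -- t4
    by_cases h : 0 < (j : ℕ)
    · have hm : (j : ℕ) - 1 < n := by omega
      simp only [c4, h, true_and, innerB, dif_pos hm, outerA, dif_pos h]
      simp
    · have hb : ∀ b : Fin n, ¬((b : ℕ) + 1 = (j : ℕ)) := by intro b hb; omega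
      simp [hb, h]

/-- DP invariant for the column-sum lower bound. -/
def Gma (n p d : ℕ) : ℤ :=
  if n = 1 then
    (max (d : ℤ) (if 4 ≤ p then 0 else if 2 ≤ p then 1 else 2)) - 1
  else if 2 ≤ p ∧ d = 0 then 0
  else if d ≤ 2 then 1
  else if d = 3 then 2
  else if n = 2 then 2 else 3

lemma gma_base (p d x : ℕ) (hd : d ≤ 4) (hx : d ≤ x) (h : 4 ≤ p + 2 * x) :
    1 + Gma 1 p d ≤ (x : ℤ) := by
  unfold Gma
  split_ifs <;> omega

lemma gma_bellman (n p d x : ℕ) (hn : 1 ≤ n) (hd : d ≤ 4) (hx : d ≤ x) :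
    Gma (n + 1) p d ≤ (x : ℤ) - 1 + Gma n x (4 - (p + 2 * x)) := by
  unfold Gma
  split_ifs <;> omega

lemma key_lemma : ∀ n, 1 ≤ n → ∀ (p d : ℕ) (c : ℕ → ℕ),
    (∀ j, n ≤ j → c j = 0) →
    (∀ j, j < n → 4 ≤ (if j = 0 then p else c (j - 1)) + 2 * c j + c (j + 1)) →
    d ≤ c 0 → d ≤ 4 →
    (n : ℤ) + Gma n p d ≤ ∑ j ∈ Finset.range n, (c j : ℤ) := by
  intro n hn
  induction n, hn using Nat.le_induction with
  | base =>
    intro p d c hz hc hd hd4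
    have h0 := hc 0 (by omega)
    have h1 : c 1 = 0 := hz 1 le_rfl
    simp only [if_true, reduceIte, Nat.zero_add] at h0
    have := gma_base p d (c 0) hd4 hd (by omega)
    simp [Finset.sum_range_one]
    omega
  | succ n hn ih =>
    intro p d c hz hc hd hd4
    set x := c 0 with hxdef
    set e := 4 - (p + 2 * x) with hedef
    have h0 := hc 0 (by omega)
    simp only [if_true, reduceIte, Nat.zero_add] at h0
    have he : e ≤ c 1 := by omega
    have ihx := ih x e (fun j => c (j + 1))
      (fun j hj => hz (j + 1) (by omega))
      (fun j hj => by
        have h' := hc (j + 1) (by omega)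
        rw [if_neg (by omega)] at h'
        simp only [Nat.add_sub_cancel] at h'
        by_cases hj0 : j = 0
        · subst hj0
          show 4 ≤ (if (0:ℕ) = 0 then x else c (0 - 1 + 1)) + 2 * c (0 + 1) + c (0 + 1 + 1)
          simpa using h'
        · show 4 ≤ (if j = 0 then x else c (j - 1 + 1)) + 2 * c (j + 1) + c (j + 1 + 1)
          rw [if_neg hj0, (by omega : j - 1 + 1 = j)]
          exact h')
      he (by omega)
    have hb := gma_bellman n p d x hn hd4 hd
    rw [← hedef] at hb
    rw [Finset.sum_range_succ' (fun j => (c j : ℤ)) n]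
    push_cast at ihx ⊢
    omega

lemma gma_zero (n : ℕ) (hn : 1 ≤ n) : Gma n 0 0 = 1 := by
  unfold Gma
  split_ifs <;> omega

/-- Lower bound. -/
lemma lower_bound (n : ℕ) (hn : 0 < n) (f : Fin 2 × Fin n → ℕ)
    (hf : IsTwoDomFn (pathGraph 2 □ pathGraph n) f) : n + 1 ≤ ∑ v, f v := by
  classical
  set c : ℕ → ℕ := fun k => if h : k < n then f (0, ⟨k, h⟩) + f (1, ⟨k, h⟩) else 0 with hcdef
  have hsum : ∑ v, f v = ∑ j ∈ Finset.range n, c j := by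
    rw [← Fin.sum_univ_eq_sum_range (fun k => c k) n]
    rw [Fintype.sum_prod_type_right]
    refine Finset.sum_congr rfl fun b _ => ?_
    rw [Fin.sum_univ_two]
    simp [hcdef, b.isLt]
  have hz : ∀ j, n ≤ j → c j = 0 := by
    intro j hj; simp [hcdef, Nat.not_lt.mpr hj]
  have r0 : Fin.rev (0 : Fin 2) = 1 := by decide
  have r1 : Fin.rev (1 : Fin 2) = 0 := by decide
  have hcon : ∀ j, j < n → 4 ≤ (if j = 0 then 0 else c (j - 1)) + 2 * c j + c (j + 1) := by
    intro k hk
    have h0 := hf (0, ⟨k, hk⟩)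
    have h1 := hf (1, ⟨k, hk⟩)
    rw [nbhdSum_eq] at h0 h1
    rw [r0] at h0
    rw [r1] at h1
    simp only [Fin.val_mk] at h0 h1 ⊢
    have e1 : c k = f (0, ⟨k, hk⟩) + f (1, ⟨k, hk⟩) := by simp [hcdef, hk]
    by_cases h2 : k + 1 < n
    · rw [dif_pos h2] at h0 h1
      have e2 : c (k + 1) = f (0, ⟨k + 1, h2⟩) + f (1, ⟨k + 1, h2⟩) := by
        simp [hcdef, h2]
      by_cases h3 : 0 < k
      · rw [dif_pos h3] at h0 h1
        have hk1 : k - 1 < n := by omega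
        have e3 : c (k - 1) = f (0, ⟨k - 1, hk1⟩) + f (1, ⟨k - 1, hk1⟩) := by
          simp [hcdef, hk1]
        rw [if_neg (by omega), e1, e2, e3]
        omega
      · rw [dif_neg h3] at h0 h1
        rw [if_pos (by omega), e1, e2]
        omega
    · rw [dif_neg h2] at h0 h1
      have e2 : c (k + 1) = 0 := hz (k + 1) (by omega)
      by_cases h3 : 0 < k
      · rw [dif_pos h3] at h0 h1
        have hk1 : k - 1 < n := by omega
        have e3 : c (k - 1) = f (0, ⟨k - 1, hk1⟩) + f (1, ⟨k - 1, hk1⟩) := by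
          simp [hcdef, hk1]
        rw [if_neg (by omega), e1, e2, e3]
        omega
      · rw [dif_neg h3] at h0 h1
        rw [if_pos (by omega), e1, e2]
        omega
  have hkey := key_lemma n hn 0 0 c hz (fun j hj => hcon j hj) (Nat.zero_le _) (by omega)
  rw [gma_zero n hn] at hkey
  rw [hsum]
  have hcast : ((∑ j ∈ Finset.range n, c j : ℕ) : ℤ) = ∑ j ∈ Finset.range n, (c j : ℤ) := by
    push_cast; ring
  rw [← hcast] at hkey
  exact_mod_cast hkey

/-- The witness function for the upper bound. -/
def fWit (n : ℕ) : Fin 2 × Fin n → ℕ := fun v =>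
  if (v.2 : ℕ) % 2 = 0 ∨ ((v.1 : ℕ) = 0 ∧ (v.2 : ℕ) = n - 1) then 1 else 0

lemma fWit_dom (n : ℕ) (hn : 0 < n) :
    IsTwoDomFn (pathGraph 2 □ pathGraph n) (fWit n) := by
  rintro ⟨i, j⟩
  rw [nbhdSum_eq]
  have hj := j.isLt
  have hi := i.isLt
  by_cases hpar : (j : ℕ) % 2 = 0
  · have t1 : fWit n (i, j) = 1 := by simp [fWit, hpar]
    have t2 : fWit n (Fin.rev i, j) = 1 := by simp [fWit, hpar]
    omega
  · have hj0 : 0 < (j : ℕ) := by omega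
    rw [dif_pos hj0]
    have t4 : fWit n (i, (⟨(j : ℕ) - 1, by omega⟩ : Fin n)) = 1 := by
      simp only [fWit]
      rw [if_pos]
      left
      omega
    rw [t4]
    by_cases h2 : (j : ℕ) + 1 < n
    · rw [dif_pos h2]
      have t3 : fWit n (i, (⟨(j : ℕ) + 1, h2⟩ : Fin n)) = 1 := by
        simp only [fWit]
        rw [if_pos]
        left
        omega
      rw [t3]
      omega
    · have hlast : (j : ℕ) = n - 1 := by omega
      by_cases hi0 : (i : ℕ) = 0
      · have t1 : fWit n (i, j) = 1 := by
          simp only [fWit]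
          rw [if_pos (Or.inr ⟨hi0, hlast⟩)]
        rw [t1]
        omega
      · have hrev : ((Fin.rev i : Fin 2) : ℕ) = 0 := by
          rw [Fin.val_rev]; omega
        have t2 : fWit n (Fin.rev i, j) = 1 := by
          simp only [fWit]
          rw [if_pos (Or.inr ⟨hrev, hlast⟩)]
        rw [t2]
        omega

lemma sum_even_two (n : ℕ) :
    ∑ k ∈ Finset.range n, (if k % 2 = 0 then 2 else 0) = n + n % 2 := by
  induction n with
  | zero => simp
  | succ m ih =>
    rw [Finset.sum_range_succ, ih]
    by_cases h : m % 2 = 0 <;> simp [h] <;> omega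

lemma fWit_sum (n : ℕ) (hn : 0 < n) : ∑ v, fWit n v = n + 1 := by
  classical
  have hsum : ∑ v, fWit n v
      = ∑ k ∈ Finset.range n,
          ((if k % 2 = 0 then 2 else 0) + (if ¬ k % 2 = 0 ∧ k = n - 1 then 1 else 0)) := by
    rw [← Fin.sum_univ_eq_sum_range
      (fun k => (if k % 2 = 0 then 2 else 0) + (if ¬ k % 2 = 0 ∧ k = n - 1 then 1 else 0)) n]
    rw [Fintype.sum_prod_type_right]
    refine Finset.sum_congr rfl fun b _ => ?_
    rw [Fin.sum_univ_two]
    have v0 : ((0 : Fin 2) : ℕ) = 0 := rfl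
    have v1 : ((1 : Fin 2) : ℕ) = 1 := rfl
    simp only [fWit, v0, v1, true_and, Nat.one_ne_zero, false_and, or_false]
    split_ifs <;> omega
  rw [hsum, Finset.sum_add_distrib, sum_even_two]
  have h2 : ∑ k ∈ Finset.range n, (if ¬ k % 2 = 0 ∧ k = n - 1 then 1 else 0)
      = if ¬ (n - 1) % 2 = 0 then 1 else 0 := by
    have : ∀ k, (if ¬ k % 2 = 0 ∧ k = n - 1 then 1 else 0)
        = (if k = n - 1 then (if ¬ k % 2 = 0 then 1 else 0) else 0) := by
      intro k; split_ifs <;> simp_all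
    simp only [this]
    rw [Finset.sum_ite_eq' (Finset.range n) (n - 1)]
    rw [if_pos (Finset.mem_range.mpr (by omega))]
  rw [h2]
  by_cases hp : (n - 1) % 2 = 0 <;> simp [hp] <;> omega

theorem stmt_3 (n : ℕ) (hn : 0 < n) :
    gamma2 (pathGraph 2 □ pathGraph n) = n + 1 := by
  unfold gamma2
  apply le_antisymm
  · exact Nat.sInf_le ⟨fWit n, fWit_dom n hn, (fWit_sum n hn).symm⟩
  · have hne : {w | ∃ f, IsTwoDomFn (pathGraph 2 □ pathGraph n) f ∧ w = ∑ v, f v}.Nonempty :=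
      ⟨n + 1, fWit n, fWit_dom n hn, (fWit_sum n hn).symm⟩
    apply le_csInf hne
    rintro w ⟨f, hf, rfl⟩
    exact lower_bound n hn f hf
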